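/- Let n and k be positive integers with n = mk + j where m ≥ 1 and 0 ≤ j ≤ k - 1. Then the signed excedance enumerator over mod-k-alternating derangements satisfies ∑_{π ∈ MPD_{n,1}^k} sgn(π) · t^{exc(π)} = (-1)^n · (-t)^k · ([m]_t)^j · ([m-1]_t)^{k-j} as polynomials in ℚ[t]. -/

import Mathlib

open Polynomial Finset

/-- Number of excedances of a permutation of `Fin n` (indices where `π i > i`). -/
def exc {n : ℕ} (π : Equiv.Perm (Fin n)) : ℕ :=
  (Finset.univ.filter fun i => π i > i).card

/-- Mod-k-alternating permutations of size `n` starting with remainder `r` (mod k):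
permutations with `π i - i ≡ r - 1 (mod k)` for all `i`. -/
def MP (n k r : ℕ) : Finset (Equiv.Perm (Fin n)) :=
  Finset.univ.filter fun π => ∀ i : Fin n, ((π i : ℤ) - (i : ℤ)) ≡ ((r : ℤ) - 1) [ZMOD (k : ℤ)]

/-- Mod-k-alternating derangements: elements of `MP n k r` with no fixed point. -/
def MPD (n k r : ℕ) : Finset (Equiv.Perm (Fin n)) :=
  (MP n k r).filter fun π => ∀ i : Fin n, π i ≠ i

/-- The q-analogue `[m]_t = 1 + t + ⋯ + t^(m-1)` as a polynomial in `ℚ[X]`. -/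
noncomputable def qnat (m : ℕ) : ℚ[X] := ∑ i ∈ Finset.range m, X ^ i

/-!
Every `π ∈ MP n k 1` preserves the residue of `i` mod `k`, so it is a family of permutations of
the `k` residue classes, each class being order-isomorphic to an initial segment of `ℕ`. Sign is
multiplicative and excedances add up over the classes, so the enumerator factors into the signed
excedance enumerators `d_s` of derangements of `Fin s`: `j` classes have `m + 1` elements, the
other `k - j` have `m`.

Writing `sgn σ · t ^ exc σ · [σ has no fixed point]` as `sgn σ · ∏ a, w(a, σ a)` with
`w = 0` on the diagonal, `t` above it and `1` below it, `d_s` is the determinant of the matrix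
`(w(j, i))`. Subtracting each row from the next one leaves a matrix whose expansion along the
first column gives `d_(s+1) = (-1) ^ s · t · [s]_t`.
-/

open Equiv Equiv.Perm

namespace Equiv.Perm

theorem sigmaCongrRight_mulSingle {ι : Type*} [DecidableEq ι] {β : ι → Type*} (i : ι)
    (τ : Perm (β i)) :
    sigmaCongrRight (Pi.mulSingle i τ) = τ.extendDomain (sigmaSubtype i).symm := by
  ext ⟨j, b⟩ : 1
  by_cases h : j = i
  · subst h
    rw [extendDomain_apply_subtype τ _ (p := fun s : Sigma β => s.1 = j) (b := ⟨j, b⟩) rfl]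
    simp [sigmaSubtype]
  · rw [extendDomain_apply_not_subtype τ _ (p := fun s : Sigma β => s.1 = i) (b := ⟨j, b⟩) h]
    simp [Pi.mulSingle_eq_of_ne h]

theorem sign_sigmaCongrRight {ι : Type*} [Fintype ι] [DecidableEq ι] {β : ι → Type*}
    [∀ i, Fintype (β i)] [∀ i, DecidableEq (β i)] (σ : ∀ i, Perm (β i)) :
    sign (sigmaCongrRight σ) = ∏ i, sign (σ i) := by
  have key : sign.comp (sigmaCongrRightHom β) = ∏ i, sign.comp (Pi.evalMonoidHom _ i) :=
    MonoidHom.pi_ext fun i τ => by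
      simp only [MonoidHom.comp_apply, sigmaCongrRightHom_apply, sigmaCongrRight_mulSingle,
        sign_extendDomain, MonoidHom.finsetProd_apply, Pi.evalMonoidHom_apply]
      rw [Fintype.prod_eq_single i fun j hj => by rw [Pi.mulSingle_eq_of_ne hj, map_one],
        Pi.mulSingle_eq_same]
  simpa using DFunLike.congr_fun key σ

end Equiv.Perm

section Fiberwise

variable {α γ : Type*} (f : α → γ)

def fiberwisePerm (σ : ∀ c, Perm {a // f a = c}) : Perm α :=
  (sigmaFiberEquiv f).permCongr (Perm.sigmaCongrRight σ)

theorem fiberwisePerm_apply_coe {σ : ∀ c, Perm {a // f a = c}} {c : γ} (x : {a // f a = c}) :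
    fiberwisePerm f σ x = σ c x := by
  obtain ⟨a, rfl⟩ := x
  rfl

variable [DecidableEq γ] [Fintype α] [Fintype γ]

theorem prod_fiberwisePerm {M : Type*} [CommMonoid M] (g : α → α → M)
    (σ : ∀ c, Perm {a // f a = c}) :
    ∏ a, g a (fiberwisePerm f σ a) = ∏ c, ∏ x : {a // f a = c}, g x (σ c x) := by
  rw [← (sigmaFiberEquiv f).prod_comp, Fintype.prod_sigma]
  exact Fintype.prod_congr _ _ fun c => Fintype.prod_congr _ _ fun x =>
    congrArg (g x) (fiberwisePerm_apply_coe f x)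

variable [DecidableEq α]

theorem sign_fiberwisePerm (σ : ∀ c, Perm {a // f a = c}) :
    sign (fiberwisePerm f σ) = ∏ c, sign (σ c) := by
  rw [fiberwisePerm, sign_permCongr, sign_sigmaCongrRight]

theorem sum_preserving_perm_eq_sum_fiberwisePerm {M : Type*} [AddCommMonoid M] (F : Perm α → M) :
    ∑ π with ∀ a, f (π a) = f a, F π
      = ∑ σ : ∀ c, Perm {a // f a = c}, F (fiberwisePerm f σ) := by
  refine (sum_bij' (fun σ _ => fiberwisePerm f σ)
    (fun π hπ c => π.subtypePerm fun a => by rw [(mem_filter.mp hπ).2])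
    (fun σ _ => mem_filter.mpr ⟨mem_univ _, fun a => (σ (f a) ⟨a, rfl⟩).2⟩)
    (fun _ _ => mem_univ _) (fun σ _ => ?_) (fun π _ => Equiv.ext fun _ => rfl)
    fun _ _ => rfl).symm
  funext c
  ext x
  simp [fiberwisePerm_apply_coe]

end Fiberwise

section ExcWeight

variable {R : Type*} [CommRing R] (t : R) {α β : Type*} [LinearOrder α] [LinearOrder β]

def excWeight (a b : α) : R := if a = b then 0 else if a < b then t else 1

theorem excWeight_map (e : α ≃o β) (a b : α) : excWeight t (e a) (e b) = excWeight t a b := by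
  simp [excWeight]

theorem excWeight_subtype {p : α → Prop} (a b : Subtype p) :
    excWeight t a b = excWeight t (a : α) b := by
  simp [excWeight, Subtype.ext_iff]

variable [Fintype α] [Fintype β]

theorem prod_excWeight (σ : Perm α) :
    ∏ a, excWeight t a (σ a) = if ∀ a, σ a ≠ a then t ^ #{a | a < σ a} else 0 := by
  split_ifs with hσ
  · have h (a : α) : excWeight t a (σ a) = if a < σ a then t else 1 := if_neg (hσ a).symm
    rw [prod_congr rfl fun a _ => h a, prod_ite, prod_const, prod_const_one, mul_one]
  · push Not at hσ
    obtain ⟨a, ha⟩ := hσ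
    exact prod_eq_zero (mem_univ a) (if_pos ha.symm)

variable (α) in
def signedDerangementEnum : R := ∑ σ : Perm α, sign σ • ∏ a, excWeight t a (σ a)

theorem signedDerangementEnum_congr (e : α ≃o β) :
    signedDerangementEnum t α = signedDerangementEnum t β := by
  refine Fintype.sum_equiv (e.toEquiv.permCongr) _ _ fun σ => ?_
  rw [sign_permCongr, ← (e.toEquiv).prod_comp]
  simp [Equiv.permCongr_apply, excWeight_map]

theorem sum_preserving_perm_eq_prod_signedDerangementEnum {γ : Type*} [Fintype γ] [DecidableEq γ]
    (f : α → γ) :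
    ∑ π with ∀ a, f (π a) = f a, sign π • ∏ a, excWeight t a (π a)
      = ∏ c, signedDerangementEnum t {a // f a = c} := by
  simp only [sum_preserving_perm_eq_sum_fiberwisePerm, sign_fiberwisePerm, prod_fiberwisePerm,
    signedDerangementEnum, excWeight_subtype, ← prod_smul]
  exact (Fintype.prod_sum fun c (τ : Perm {a // f a = c}) =>
    sign τ • ∏ x : {a // f a = c}, excWeight t (x : α) (τ x)).symm

end ExcWeight

section Determinant

variable {R : Type*} [CommRing R] (t : R)

def excMatrix (s : ℕ) : Matrix (Fin s) (Fin s) R := Matrix.of fun i j => excWeight t j i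

theorem signedDerangementEnum_fin_eq_det (s : ℕ) :
    signedDerangementEnum t (Fin s) = (excMatrix t s).det := by
  rw [Matrix.det_apply]
  rfl

-- For `a = 0`, `excMatrix` with every row but the first replaced by its difference with the
-- previous row; `a = 1` arises as a minor in the expansion along the first column.
def reducedExcMatrix (a : R) (s : ℕ) : Matrix (Fin s) (Fin s) R :=
  Matrix.of fun i j => if (i : ℕ) = 0 then (if (j : ℕ) = 0 then a else 1)
    else if (j : ℕ) + 1 = i then t else if j = i then -1 else 0

theorem det_excMatrix_succ (s : ℕ) :
    (excMatrix t (s + 1)).det = (reducedExcMatrix t 0 (s + 1)).det := by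
  refine Matrix.det_eq_of_forall_row_eq_smul_add_pred (fun _ => 1) (fun j => ?_) fun i j => ?_
  · simp only [excMatrix, reducedExcMatrix, excWeight, Matrix.of_apply, Fin.ext_iff, Fin.lt_def]
    split_ifs <;> first | omega | simp_all
  · simp only [excMatrix, reducedExcMatrix, excWeight, Matrix.of_apply, Fin.ext_iff, Fin.lt_def,
      Fin.val_succ, Fin.val_castSucc, one_mul]
    split_ifs <;> first | omega | ring1 | simp_all

theorem det_reducedExcMatrix_submatrix_succ (a : R) (s : ℕ) :
    ((reducedExcMatrix t a (s + 1)).submatrix Fin.succ Fin.succ).det = (-1) ^ s := by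
  rw [Matrix.det_of_isLowerTriangular]
  · simp [reducedExcMatrix]
  · intro i j hij
    have hij : i < j := hij
    have : (j : ℕ) + 1 ≠ i := by omega
    simp [reducedExcMatrix, this, hij.ne']

theorem reducedExcMatrix_submatrix_one (a : R) (s : ℕ) :
    (reducedExcMatrix t a (s + 2)).submatrix (Fin.succAbove 1) Fin.succ
      = reducedExcMatrix t 1 (s + 1) := by
  ext i j
  cases i using Fin.cases with
  | zero => simp [reducedExcMatrix]
  | succ i => simp [reducedExcMatrix, Fin.one_succAbove_succ]

theorem det_reducedExcMatrix (a : R) (s : ℕ) :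
    (reducedExcMatrix t a (s + 1)).det = (-1) ^ s * (a + t * ∑ i ∈ range s, t ^ i) := by
  induction s generalizing a with
  | zero => simp [reducedExcMatrix]
  | succ s ih =>
    rw [Matrix.det_succ_column_zero, Fin.sum_univ_succ, Fin.sum_univ_succ,
      Fintype.sum_eq_zero _ fun i => by simp [reducedExcMatrix, Fin.succ_ne_zero, eq_comm],
      Fin.succ_zero_eq_one, Fin.succAbove_zero, reducedExcMatrix_submatrix_one,
      det_reducedExcMatrix_submatrix_succ, ih, geom_sum_succ]
    simp [reducedExcMatrix]
    ring

theorem signedDerangementEnum_fin_succ (s : ℕ) :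
    signedDerangementEnum t (Fin (s + 1)) = (-1) ^ s * t * ∑ i ∈ range s, t ^ i := by
  rw [signedDerangementEnum_fin_eq_det, det_excMatrix_succ, det_reducedExcMatrix, zero_add,
    mul_assoc]

end Determinant

theorem mem_MP_one_iff {n k : ℕ} {π : Perm (Fin n)} :
    π ∈ MP n k 1 ↔ ∀ i, ((π i : ℕ) : ZMod k) = ((i : ℕ) : ZMod k) := by
  simp only [MP, mem_filter, mem_univ, true_and, Nat.cast_one, sub_self]
  refine forall_congr' fun i => ?_
  rw [← ZMod.intCast_eq_intCast_iff, Int.cast_sub, Int.cast_zero, sub_eq_zero]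
  simp

theorem sum_MPD_one_eq_prod_signedDerangementEnum {n k : ℕ} [NeZero k] :
    ∑ π ∈ MPD n k 1, ((sign π : ℤ) : ℚ[X]) * X ^ exc π
      = ∏ c : ZMod k, signedDerangementEnum X {i : Fin n // ((i : ℕ) : ZMod k) = c} := by
  have hterm (π : Perm (Fin n)) : sign π • ∏ i, excWeight X i (π i)
      = if ∀ i, π i ≠ i then ((sign π : ℤ) : ℚ[X]) * X ^ exc π else 0 := by
    rw [prod_excWeight, smul_ite, smul_zero, Units.smul_def, zsmul_eq_mul]
    split_ifs <;> rfl
  rw [← sum_preserving_perm_eq_prod_signedDerangementEnum, MPD, sum_filter]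
  exact sum_congr (by ext π; simp [mem_MP_one_iff]) fun π _ => (hterm π).symm

theorem card_fiber_natCast_zmod {n k : ℕ} [NeZero k] (c : ZMod k) :
    Fintype.card {i : Fin n // ((i : ℕ) : ZMod k) = c}
      = n / k + if c.val < n % k then 1 else 0 := by
  have hc : c.val % k = c.val := Nat.mod_eq_of_lt (ZMod.val_lt c)
  have hfiber (x : ℕ) : (x : ZMod k) = c ↔ x ≡ c.val [MOD k] := by
    rw [← ZMod.natCast_eq_natCast_iff, ZMod.natCast_zmod_val]
  rw [← hc, ← Nat.count_modEq_card _ (NeZero.pos k), Nat.count_eq_card_filter_range,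
    card_filter, Fintype.card_subtype, card_filter]
  simp_rw [hfiber]
  exact Fin.sum_univ_eq_sum_range (fun x => if x ≡ c.val [MOD k] then 1 else 0) n

theorem prod_univ_zmod_val_eq_prod_range {k : ℕ} [NeZero k] {M : Type*} [CommMonoid M]
    (g : ℕ → M) :
    ∏ c : ZMod k, g c.val = ∏ i ∈ range k, g i :=
  prod_nbij' ZMod.val Nat.cast (fun c _ => mem_range.mpr (ZMod.val_lt c)) (fun _ _ => mem_univ _)
    (fun c _ => ZMod.natCast_zmod_val c) (fun _ hi => ZMod.val_cast_of_lt (mem_range.mp hi))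
    fun _ _ => rfl

theorem prod_range_ite_lt {M : Type*} [CommMonoid M] {j k : ℕ} (h : j ≤ k) (a b : M) :
    ∏ i ∈ range k, (if i < j then a else b) = a ^ j * b ^ (k - j) := by
  rw [← prod_range_mul_prod_Ico _ h,
    prod_congr rfl fun i hi => if_pos (mem_range.mp hi),
    prod_congr rfl fun i hi => if_neg (not_lt.mpr (mem_Ico.mp hi).1),
    prod_const, prod_const, card_range, Nat.card_Ico]

theorem stmt3_general (n k m j : ℕ) (hk : 0 < k) (hm : 1 ≤ m)
    (hj : j ≤ k - 1) (hmj : n = m * k + j) :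
    ∑ π ∈ MPD n k 1, ((Equiv.Perm.sign π : ℤ) : ℚ[X]) * X ^ exc π
      = (-1) ^ n * (-X) ^ k * (qnat m) ^ j * (qnat (m - 1)) ^ (k - j) := by
  have : NeZero k := ⟨hk.ne'⟩
  have hjk : j < k := by omega
  have hcard (c : ZMod k) : Fintype.card {i : Fin n // ((i : ℕ) : ZMod k) = c}
      = (if c.val < j then m else m - 1) + 1 := by
    obtain ⟨hdiv, hmod⟩ : n / k = m ∧ n % k = j :=
      (Nat.div_mod_unique hk).mpr ⟨by rw [hmj, Nat.mul_comm, add_comm], hjk⟩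
    rw [card_fiber_natCast_zmod, hdiv, hmod]
    split_ifs <;> omega
  have hfactor (c : ZMod k) : signedDerangementEnum X {i : Fin n // ((i : ℕ) : ZMod k) = c}
      = if c.val < j then (-1) ^ m * X * qnat m else (-1) ^ (m - 1) * X * qnat (m - 1) := by
    rw [← signedDerangementEnum_congr X (Fintype.orderIsoFinOfCardEq _ (hcard c)),
      signedDerangementEnum_fin_succ]
    split_ifs <;> rfl
  rw [sum_MPD_one_eq_prod_signedDerangementEnum, Fintype.prod_congr _ _ hfactor,
    prod_univ_zmod_val_eq_prod_range fun i => if i < j then _ else _, prod_range_ite_lt hjk.le]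
  obtain ⟨m, rfl⟩ : ∃ m', m = m' + 1 := ⟨m - 1, by omega⟩
  obtain ⟨d, rfl⟩ : ∃ d, k = j + d := ⟨k - j, by omega⟩
  have hsign : (-1 : ℚ[X]) ^ n * (-1) ^ (j + d) = (-1) ^ ((m + 1) * j + m * d) := by
    rw [← pow_add, show n + (j + d) = (m + 1) * j + m * d + 2 * (j + d) by rw [hmj]; ring,
      pow_add, pow_mul, neg_one_sq, one_pow, mul_one]
  rw [neg_pow, Nat.add_sub_cancel, Nat.add_sub_cancel_left]
  linear_combination (-(X : ℚ[X]) ^ (j + d) * qnat (m + 1) ^ j * qnat m ^ d) * hsign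

theorem stmt3 (n k m j : ℕ) (hn : 0 < n) (hk : 0 < k) (hm : 1 ≤ m)
    (hj : j ≤ k - 1) (hmj : n = m * k + j) :
    ∑ π ∈ MPD n k 1, ((Equiv.Perm.sign π : ℤ) : ℚ[X]) * X ^ exc π
      = (-1) ^ n * (-X) ^ k * (qnat m) ^ j * (qnat (m - 1)) ^ (k - j) :=
  stmt3_general n k m j hk hm hj hmj
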